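/- Let Ξ be the combination of balanced-exchange and school-level diversity policies: Ξ = {ξ : p_c^t ≤ ξ_c^t ≤ q_c^t for all (c,t), and ∑_t ∑_{c with d(c)=d} ξ_c^t = k_d for all districts d}. Then Ξ ∩ Ξ⁰ is an M-convex set. -/

import Mathlib

/-!
Let `ξ' (c, t) < ξ (c, t)`. If `ξ'` exceeds `ξ` at some other type `t'` of the same school `c`,
exchange `(c, t)` with `(c, t')`: school totals do not change, and the type bounds survive because
the inequalities are strict. Otherwise school `c` holds strictly more under `ξ` than under `ξ'`;
as both distributions give the district of `c` the same total, some other school `c₂` of that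
district holds strictly more under `ξ'`, hence has spare capacity under `ξ` (and `c` has spare
capacity under `ξ'`), and any type `t₂` with `ξ (c₂, t₂) < ξ' (c₂, t₂)` is an exchange partner.
-/

open Finset

/-- Move one unit from coordinate `i` to coordinate `j`:  ξ - χ_i + χ_j. -/
def move {ι : Type*} [DecidableEq ι] (ξ : ι → ℕ) (i j : ι) : ι → ℕ :=
  fun k => ξ k - (if k = i then 1 else 0) + (if k = j then 1 else 0)

/-- A set of distributions is M-convex. -/
def MConvex {ι : Type*} [DecidableEq ι] (S : Set (ι → ℕ)) : Prop :=
  ∀ ξ ∈ S, ∀ ξ' ∈ S, ∀ i, ξ' i < ξ i →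
    ∃ j, ξ j < ξ' j ∧ move ξ i j ∈ S ∧ move ξ' j i ∈ S

/-- The set Ξ⁰ of distributions with total sum `N` respecting the school
capacities `q`. -/
def Xi0 {C T : Type*} [Fintype C] [Fintype T] (N : ℕ) (q : C → ℕ) :
    Set (C × T → ℕ) :=
  {ξ | (∑ p, ξ p = N) ∧ ∀ c, ∑ t, ξ (c, t) ≤ q c}

section Move

variable {ι : Type*} [DecidableEq ι] {ξ : ι → ℕ} {i j : ι}

theorem move_add_ite (hi : 0 < ξ i) (x : ι) :
    move ξ i j x + (if x = i then 1 else 0) = ξ x + (if x = j then 1 else 0) := by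
  unfold move
  split_ifs <;> subst_eqs <;> omega

theorem sum_move_add_ite (hi : 0 < ξ i) (s : Finset ι) :
    ∑ x ∈ s, move ξ i j x + (if i ∈ s then 1 else 0)
      = ∑ x ∈ s, ξ x + (if j ∈ s then 1 else 0) := by
  simpa only [sum_add_distrib, sum_ite_eq'] using
    sum_congr rfl fun x (_ : x ∈ s) => move_add_ite (j := j) hi x

theorem sum_move_of_mem_iff (hi : 0 < ξ i) {s : Finset ι} (hs : i ∈ s ↔ j ∈ s) :
    ∑ x ∈ s, move ξ i j x = ∑ x ∈ s, ξ x := by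
  have := sum_move_add_ite (j := j) hi s
  split_ifs at this <;> grind

theorem sum_move_le (hi : 0 < ξ i) {s : Finset ι} {b : ℕ} (hb : ∑ x ∈ s, ξ x ≤ b)
    (hs : j ∈ s → i ∈ s ∨ ∑ x ∈ s, ξ x < b) : ∑ x ∈ s, move ξ i j x ≤ b := by
  have := sum_move_add_ite (j := j) hi s
  split_ifs at this <;> grind

theorem move_mem_box {lo hi : ι → ℕ} (hξ : ∀ x, lo x ≤ ξ x ∧ ξ x ≤ hi x)
    (hlo : lo i < ξ i) (hhi : ξ j < hi j) (x : ι) :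
    lo x ≤ move ξ i j x ∧ move ξ i j x ≤ hi x := by
  have hmove := move_add_ite (j := j) (hlo.trans_le' (Nat.zero_le _)) x
  have := hξ x
  split_ifs at hmove <;> subst_eqs <;> omega

end Move

/-- The paper's `Ξ`. -/
def combinedPolicy {C T D : Type*} [Fintype C] [Fintype T] [DecidableEq D]
    (p qct : C → T → ℕ) (dc : C → D) (k : D → ℕ) : Set (C × T → ℕ) :=
  {ξ | (∀ c t, p c t ≤ ξ (c, t) ∧ ξ (c, t) ≤ qct c t) ∧
    ∀ d, ∑ c ∈ univ.filter (fun c => dc c = d), ∑ t, ξ (c, t) = k d}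

section Policy

variable {C T D : Type*} [Fintype C] [Fintype T] [DecidableEq C] [DecidableEq T] [DecidableEq D]
  {p qct : C → T → ℕ} {dc : C → D} {k : D → ℕ} {N : ℕ} {q : C → ℕ}

theorem move_mem_combinedPolicy_inter_Xi0 {ξ : C × T → ℕ}
    (hξ : ξ ∈ combinedPolicy p qct dc k ∩ Xi0 N q) {i j : C × T}
    (hi : p i.1 i.2 < ξ i) (hj : ξ j < qct j.1 j.2) (hd : dc j.1 = dc i.1)
    (hcap : j.1 = i.1 ∨ ∑ t, ξ (j.1, t) < q j.1) :
    move ξ i j ∈ combinedPolicy p qct dc k ∩ Xi0 N q := by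
  obtain ⟨⟨hbox, hdist⟩, htotal, hschool⟩ := hξ
  have hpos : 0 < ξ i := hi.trans_le' (Nat.zero_le _)
  have hfiber (s : Finset C) (f : C × T → ℕ) :
      ∑ c ∈ s, ∑ t, f (c, t) = ∑ x ∈ s ×ˢ univ, f x := sum_product ..|>.symm
  refine ⟨⟨fun c t => ?_, fun d => ?_⟩, ?_, fun c => ?_⟩
  · exact move_mem_box (lo := fun x => p x.1 x.2) (hi := fun x => qct x.1 x.2)
      (fun x => hbox x.1 x.2) hi hj (c, t)
  · rw [hfiber, sum_move_of_mem_iff hpos (by simp [hd]), ← hfiber, hdist]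
  · exact (sum_move_of_mem_iff hpos (by simp)).trans htotal
  · have hsingle (f : C × T → ℕ) : ∑ t, f (c, t) = ∑ x ∈ {c} ×ˢ univ, f x := by
      rw [← hfiber, sum_singleton]
    rw [hsingle]
    refine sum_move_le hpos (hsingle ξ ▸ hschool c) fun hjc => ?_
    simp only [mem_product, mem_singleton, mem_univ, and_true] at hjc ⊢
    subst hjc
    exact hcap.imp Eq.symm (hsingle ξ ▸ ·)

theorem move_mem_and_move_mem {ξ ξ' : C × T → ℕ}
    (hξ : ξ ∈ combinedPolicy p qct dc k ∩ Xi0 N q)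
    (hξ' : ξ' ∈ combinedPolicy p qct dc k ∩ Xi0 N q) {i j : C × T}
    (hi : ξ' i < ξ i) (hj : ξ j < ξ' j) (hd : dc j.1 = dc i.1)
    (hschool : j.1 = i.1 ∨
      ∑ t, ξ (j.1, t) < ∑ t, ξ' (j.1, t) ∧ ∑ t, ξ' (i.1, t) < ∑ t, ξ (i.1, t)) :
    move ξ i j ∈ combinedPolicy p qct dc k ∩ Xi0 N q ∧
      move ξ' j i ∈ combinedPolicy p qct dc k ∩ Xi0 N q :=
  ⟨move_mem_combinedPolicy_inter_Xi0 hξ ((hξ'.1.1 i.1 i.2).1.trans_lt hi)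
      (hj.trans_le (hξ'.1.1 j.1 j.2).2) hd
      (hschool.imp_right fun h => h.1.trans_le (hξ'.2.2 j.1)),
    move_mem_combinedPolicy_inter_Xi0 hξ' ((hξ.1.1 j.1 j.2).1.trans_lt hj)
      (hi.trans_le (hξ.1.1 i.1 i.2).2) hd.symm
      (hschool.imp Eq.symm fun h => h.2.trans_le (hξ.2.2 i.1))⟩

end Policy

theorem exists_exchange_partner {C T : Type*} [Fintype T] [DecidableEq C]
    {ξ ξ' : C × T → ℕ} {s : Finset C}
    (hs : ∑ c ∈ s, ∑ t, ξ (c, t) = ∑ c ∈ s, ∑ t, ξ' (c, t)) {i : C × T} (his : i.1 ∈ s)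
    (hi : ξ' i < ξ i) :
    ∃ j, ξ j < ξ' j ∧ j.1 ∈ s ∧ (j.1 = i.1 ∨
      ∑ t, ξ (j.1, t) < ∑ t, ξ' (j.1, t) ∧ ∑ t, ξ' (i.1, t) < ∑ t, ξ (i.1, t)) := by
  by_cases hsame : ∃ t, ξ (i.1, t) < ξ' (i.1, t)
  · obtain ⟨t, ht⟩ := hsame
    exact ⟨(i.1, t), ht, his, Or.inl rfl⟩
  push Not at hsame
  have hless : ∑ t, ξ' (i.1, t) < ∑ t, ξ (i.1, t) :=
    sum_lt_sum (fun t _ => hsame t) ⟨i.2, mem_univ _, hi⟩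
  have hrest : ∑ c ∈ s.erase i.1, ∑ t, ξ (c, t) < ∑ c ∈ s.erase i.1, ∑ t, ξ' (c, t) := by
    have := add_sum_erase s (fun c => ∑ t, ξ (c, t)) his
    have := add_sum_erase s (fun c => ∑ t, ξ' (c, t)) his
    omega
  obtain ⟨c, hc, hcless⟩ := exists_lt_of_sum_lt hrest
  obtain ⟨t, -, ht⟩ := exists_lt_of_sum_lt hcless
  exact ⟨(c, t), ht, mem_of_mem_erase hc, Or.inr ⟨hcless, hless⟩⟩

/-- For the combination of the balanced-exchange and the school-level
diversity policies, `Ξ ∩ Ξ⁰` is an M-convex set. -/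
theorem combination_MConvex
    {C T D : Type*} [Fintype C] [Fintype T] [Fintype D]
    [DecidableEq C] [DecidableEq T] [DecidableEq D]
    (q : C → ℕ) (dc : C → D) (k : D → ℕ) (p qct : C → T → ℕ) :
    MConvex ({ξ : C × T → ℕ |
        (∀ c t, p c t ≤ ξ (c, t) ∧ ξ (c, t) ≤ qct c t) ∧
        ∀ d, ∑ c ∈ univ.filter (fun c => dc c = d), ∑ t, ξ (c, t) = k d}
      ∩ Xi0 (T := T) (∑ d, k d) q) := by
  intro ξ hξ ξ' hξ' i hi
  obtain ⟨j, hj, hjd, hschool⟩ :=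
    exists_exchange_partner (s := univ.filter (fun c => dc c = dc i.1))
      ((hξ.1.2 _).trans (hξ'.1.2 _).symm) (by simp) hi
  exact ⟨j, hj, move_mem_and_move_mem hξ hξ' hi hj (by simpa using hjd) hschool⟩
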